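/- arXiv:2007.03385 — 5 statements merged into one kernel-verified Lean document; each statement's English description precedes it below -/
import Mathlib

section
/- The free rack Fr(A) = A × F(A) satisfies the universal property: for any rack X and any function f: A → X, there is a unique rack homomorphism f̄: Fr(A) → X with f̄(a, e) = f(a) for all a ∈ A. -/
/-!
Every generator `a` of `F(A)` acts on `X` by the rack automorphism `x ↦ x ◁ f a`; as rack
automorphisms form a group, this gives a right action `x · w` of `F(A)` on `X` by automorphisms,
and `f̄ (a, w) = f a · w` is the extension. In `Fr(A)` one has `(a, w) ◁ (b, e) = (a, w b)`, so any
extension satisfies `f̄ (a, v w) = f̄ (a, v) · w`, which forces uniqueness.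
-/

/-- A rack: a set with operations `◁`, `◁⁻¹` satisfying (R1) and (R2). -/
class PaperRack (X : Type*) where
  act : X → X → X
  inv : X → X → X
  r1a : ∀ x y, inv (act x y) y = x
  r1b : ∀ x y, act (inv x y) y = x
  r2 : ∀ x y z, act (act x y) z = act (act x z) (act y z)

infixl:70 " ◁ " => PaperRack.act
infixl:70 " ◁⁻¹ " => PaperRack.inv

/-- The operation `(a,g) ◁ (b,h) = (a, g·h⁻¹·b·h)` on the free rack `A × F(A)`. -/
def frAct {A : Type*} (p q : A × FreeGroup A) : A × FreeGroup A :=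
  (p.1, p.2 * q.2⁻¹ * FreeGroup.of q.1 * q.2)

namespace PaperRack

variable {X : Type*} [PaperRack X]

theorem act_left_injective (y : X) : Function.Injective (· ◁ y) := fun x₁ x₂ h => by
  simpa only [r1a] using congrArg (· ◁⁻¹ y) h

def actPerm (y : X) : Equiv.Perm X where
  toFun x := x ◁ y
  invFun x := x ◁⁻¹ y
  left_inv x := r1a x y
  right_inv x := r1b x y

variable (X) in
def autGroup : Subgroup (Equiv.Perm X) where
  carrier := {σ | ∀ x y : X, σ (x ◁ y) = σ x ◁ σ y}
  mul_mem' {σ τ} hσ hτ x y := by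
    simp only [Equiv.Perm.mul_apply, hτ x y, hσ (τ x) (τ y)]
  one_mem' _ _ := rfl
  inv_mem' {σ} hσ x y := σ.injective (by
    simp only [Set.mem_ofPred_eq] at hσ
    simp [hσ])

theorem actPerm_mem_autGroup (y : X) : actPerm y ∈ autGroup X :=
  fun x z => r2 x z y

end PaperRack

namespace FreeRack

open PaperRack

variable {A X : Type*} [PaperRack X] (f : A → X)

/-- The right action of `F(A)` on `X` in which `a` acts by `· ◁ f a`, as an antihomomorphism. -/
noncomputable def generatorAction : FreeGroup A →* (autGroup X)ᵐᵒᵖ :=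
  FreeGroup.lift fun a => MulOpposite.op ⟨actPerm (f a), actPerm_mem_autGroup (f a)⟩

noncomputable def rightAct (x : X) (w : FreeGroup A) : X :=
  ((generatorAction f w).unop : Equiv.Perm X) x

theorem rightAct_one (x : X) : rightAct f x 1 = x := by
  simp [rightAct]

theorem rightAct_mul (x : X) (v w : FreeGroup A) :
    rightAct f x (v * w) = rightAct f (rightAct f x v) w := by
  simp [rightAct]

theorem rightAct_of (x : X) (b : A) : rightAct f x (FreeGroup.of b) = x ◁ f b := by
  simp [rightAct, generatorAction, actPerm]

theorem rightAct_rightAct_inv (x : X) (w : FreeGroup A) :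
    rightAct f (rightAct f x w⁻¹) w = x := by
  rw [← rightAct_mul, inv_mul_cancel, rightAct_one]

theorem rightAct_act (x y : X) (w : FreeGroup A) :
    rightAct f (x ◁ y) w = rightAct f x w ◁ rightAct f y w :=
  (generatorAction f w).unop.2 x y

noncomputable def lift (p : A × FreeGroup A) : X :=
  rightAct f (f p.1) p.2

theorem lift_frAct (p q : A × FreeGroup A) : lift f (frAct p q) = lift f p ◁ lift f q := by
  obtain ⟨a, v⟩ := p
  obtain ⟨b, h⟩ := q
  calc rightAct f (f a) (v * h⁻¹ * FreeGroup.of b * h)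
      = rightAct f (rightAct f (rightAct f (f a) v) h⁻¹ ◁ f b) h := by
        rw [rightAct_mul, rightAct_mul, rightAct_mul, rightAct_of]
    _ = rightAct f (f a) v ◁ rightAct f (f b) h := by
        rw [rightAct_act, rightAct_rightAct_inv]

theorem lift_mk_one (a : A) : lift f (a, 1) = f a :=
  rightAct_one f (f a)

theorem frAct_mk_one (a b : A) (v : FreeGroup A) :
    frAct (a, v) (b, 1) = (a, v * FreeGroup.of b) := by
  simp [frAct]

theorem apply_mk_mul_eq_rightAct {g : A × FreeGroup A → X}
    (hg : ∀ p q, g (frAct p q) = g p ◁ g q) (a : A) (v w : FreeGroup A) :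
    g (a, v * w) = rightAct (fun b => g (b, 1)) (g (a, v)) w := by
  have mul_of (v : FreeGroup A) (b : A) : g (a, v * FreeGroup.of b) = g (a, v) ◁ g (b, 1) := by
    rw [← frAct_mk_one, hg]
  induction w using FreeGroup.induction_on generalizing v with
  | C1 => rw [mul_one, rightAct_one]
  | of b => rw [mul_of, rightAct_of]
  | inv_of b _ =>
    apply act_left_injective (g (b, 1))
    beta_reduce
    rw [← mul_of, inv_mul_cancel_right, ← rightAct_of (fun b => g (b, 1)), ← rightAct_mul,
      inv_mul_cancel, rightAct_one]
  | mul x y ihx ihy => rw [← mul_assoc, ihy, ihx, ← rightAct_mul]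

end FreeRack

/-- Universal property of the free rack `Fr(A) = A × F(A)`: every function
`f : A → X` to a rack `X` extends uniquely to a rack homomorphism
`A × F(A) → X` sending `(a, e)` to `f a`. -/
theorem freeRack_universal_property {A X : Type*} [PaperRack X] (f : A → X) :
    ∃! g : A × FreeGroup A → X,
      (∀ p q : A × FreeGroup A, g (frAct p q) = g p ◁ g q) ∧
      (∀ a : A, g (a, (1 : FreeGroup A)) = f a) := by
  refine ⟨FreeRack.lift f, ⟨FreeRack.lift_frAct f, FreeRack.lift_mk_one f⟩, ?_⟩
  rintro g ⟨hg, hg_one⟩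
  funext ⟨a, w⟩
  have hg_gen : (fun b => g (b, 1)) = f := funext hg_one
  have h := FreeRack.apply_mk_mul_eq_rightAct hg a 1 w
  rwa [one_mul, hg_gen, hg_one] at h
end

section
/- Let G be a group generated by a subset A, and f: G → H a group homomorphism. The set K_f of f-symmetric paths — elements g ∈ G of the form g = g_a·g_b⁻¹ where g_a = a_1^{δ_1}···a_n^{δ_n}, g_b = b_1^{δ_1}···b_n^{δ_n} for pairs (a_i, b_i) ∈ A × A with f(a_i) = f(b_i) and δ_i ∈ {−1, 1} — is a normal subgroup of G, and equals the normal subgroup of G generated by the elements ab⁻¹ with a, b ∈ A and f(a) = f(b). -/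
/-- Two elements `ga`, `gb` of `G` are `f`-symmetric to each other (with respect to a
generating set `A`): `ga = a₁^{δ₁} ⋯ aₙ^{δₙ}` and `gb = b₁^{δ₁} ⋯ bₙ^{δₙ}` for pairs
`(aᵢ, bᵢ) ∈ A × A` with `f aᵢ = f bᵢ` and signs `δᵢ ∈ {-1, 1}`. -/
def FSymPair {G H : Type*} [Group G] [Group H] (A : Set G) (f : G →* H)
    (ga gb : G) : Prop :=
  ∃ (n : ℕ) (a b : Fin n → G) (δ : Fin n → ℤ),
    (∀ i, a i ∈ A ∧ b i ∈ A ∧ f (a i) = f (b i) ∧ (δ i = 1 ∨ δ i = -1)) ∧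
    ga = (List.ofFn fun i => a i ^ δ i).prod ∧
    gb = (List.ofFn fun i => b i ^ δ i).prod

/-
Pair the two words: `ga` and `gb` are `f`-symmetric exactly when `(ga, gb)` lies in the subgroup
`P ≤ G × G` generated by the pairs `(a, b) ∈ A × A` with `f a = f b`. As `A` generates `G`, `P`
contains the diagonal, so `(ga, gb) ∈ P ↔ (ga * gb⁻¹, 1) ∈ P`: the symmetric paths form the
preimage of `P` under `g ↦ (g, 1)`, a subgroup that is normal because conjugation by `(g, g)`
preserves `P`. It contains every `a * b⁻¹`, and it lies in the normal closure `N` of these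
elements because the generators of `P`, hence all of `P`, have equal images in `G ⧸ N`.
-/

theorem List.prod_ofFn_prodMk {M N : Type*} [Monoid M] [Monoid N] {n : ℕ} (u : Fin n → M)
    (v : Fin n → N) :
    ((List.ofFn u).prod, (List.ofFn v).prod) = (List.ofFn fun i => (u i, v i)).prod := by
  induction n with
  | zero => simp
  | succ n ih => simp [List.ofFn_succ, ← ih]

section

variable {G H : Type*} [Group G] [Group H]

section DiagonalSubgroup

variable {P : Subgroup (G × G)}

theorem setOf_mul_inv_eq_comap_inl (hP : ∀ g, (g, g) ∈ P) :
    {g : G | ∃ x y : G, (x, y) ∈ P ∧ g = x * y⁻¹} = P.comap (MonoidHom.inl G G) := by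
  ext g
  constructor
  · rintro ⟨x, y, hxy, rfl⟩
    have h : ((x * y⁻¹, 1) : G × G) = (x, y) * (y, y)⁻¹ := by ext <;> simp
    change ((x * y⁻¹, 1) : G × G) ∈ P
    rw [h]
    exact P.mul_mem hxy (P.inv_mem (hP y))
  · intro hg
    exact ⟨g, 1, hg, by simp⟩

theorem normal_comap_inl (hP : ∀ g, (g, g) ∈ P) : (P.comap (MonoidHom.inl G G)).Normal where
  conj_mem k hk g := by
    have h : ((g * k * g⁻¹, 1) : G × G) = (g, g) * (k, 1) * (g, g)⁻¹ := by ext <;> simp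
    change ((g * k * g⁻¹, 1) : G × G) ∈ P
    rw [h]
    exact P.mul_mem (P.mul_mem (hP g) hk) (P.inv_mem (hP g))

end DiagonalSubgroup

theorem comap_inl_closure_le {T : Set (G × G)} {N : Subgroup G} [N.Normal]
    (hT : ∀ p ∈ T, p.1 * p.2⁻¹ ∈ N) :
    (Subgroup.closure T).comap (MonoidHom.inl G G) ≤ N := by
  intro k hk
  have hle : Subgroup.closure T ≤
      MonoidHom.eqLocus ((QuotientGroup.mk' N).comp (MonoidHom.fst G G))
        ((QuotientGroup.mk' N).comp (MonoidHom.snd G G)) :=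
    (Subgroup.closure_le _).2 fun p hp =>
      QuotientGroup.eq_iff_div_mem.2 (by simpa [div_eq_mul_inv] using hT p hp)
  have hk1 : (k : G ⧸ N) = ((1 : G) : G ⧸ N) := hle hk
  rwa [QuotientGroup.eq_iff_div_mem, div_one] at hk1

def fSymGenerators (A : Set G) (f : G →* H) : Set (G × G) :=
  {p | p.1 ∈ A ∧ p.2 ∈ A ∧ f p.1 = f p.2}

theorem fSymPair_iff_mem_closure {A : Set G} {f : G →* H} {ga gb : G} :
    FSymPair A f ga gb ↔ (ga, gb) ∈ Subgroup.closure (fSymGenerators A f) := by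
  constructor
  · rintro ⟨n, a, b, δ, h, rfl, rfl⟩
    rw [List.prod_ofFn_prodMk]
    refine list_prod_mem fun x hx => ?_
    obtain ⟨i, rfl⟩ := List.mem_ofFn.1 hx
    obtain ⟨ha, hb, hab, -⟩ := h i
    have hab : (a i, b i) ∈ fSymGenerators A f := ⟨ha, hb, hab⟩
    rw [← Prod.pow_mk]
    exact zpow_mem (Subgroup.subset_closure hab) _
  · intro hmem
    rw [← Subgroup.mem_toSubmonoid, Subgroup.closure_toSubmonoid] at hmem
    obtain ⟨l, hl, hprod⟩ := Submonoid.exists_list_of_mem_closure hmem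
    have hsigned : ∀ i : Fin l.length,
        ∃ p ∈ fSymGenerators A f, ∃ δ : ℤ, (δ = 1 ∨ δ = -1) ∧ l[(i : ℕ)] = p ^ δ := by
      intro i
      rcases hl _ (List.getElem_mem _) with h | h
      · exact ⟨_, h, 1, Or.inl rfl, (zpow_one _).symm⟩
      · exact ⟨_, h, -1, Or.inr rfl, by simp⟩
    choose p hp δ hδ hlp using hsigned
    refine ⟨l.length, fun i => (p i).1, fun i => (p i).2, δ,
      fun i => ⟨(hp i).1, (hp i).2.1, (hp i).2.2, hδ i⟩, Prod.mk_inj.1 ?_⟩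
    rw [List.prod_ofFn_prodMk, ← hprod]
    conv_lhs => rw [← List.ofFn_getElem (xs := l)]
    simp only [hlp]
    rfl

theorem diag_mem_closure_fSymGenerators {A : Set G} (hA : Subgroup.closure A = ⊤) (f : G →* H)
    (g : G) : (g, g) ∈ Subgroup.closure (fSymGenerators A f) := by
  have hg : (g, g) ∈ (Subgroup.closure A).map ((MonoidHom.id G).prod (MonoidHom.id G)) := by
    rw [hA]
    exact ⟨g, trivial, rfl⟩
  rw [MonoidHom.map_closure] at hg
  refine Subgroup.closure_mono ?_ hg
  rintro _ ⟨a, ha, rfl⟩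
  exact ⟨ha, ha, rfl⟩

end

/-- The set `K_f` of `f`-symmetric paths `ga·gb⁻¹` is a normal subgroup of `G`:
it equals the normal closure of `{a·b⁻¹ | a, b ∈ A, f a = f b}`. -/
theorem fSymmetricPaths_eq_normalClosure {G H : Type*} [Group G] [Group H]
    (A : Set G) (hA : Subgroup.closure A = ⊤) (f : G →* H) :
    {g : G | ∃ ga gb : G, FSymPair A f ga gb ∧ g = ga * gb⁻¹} =
      ↑(Subgroup.normalClosure
        {x : G | ∃ a ∈ A, ∃ b ∈ A, f a = f b ∧ x = a * b⁻¹}) := by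
  have hdiag := diag_mem_closure_fSymGenerators hA f
  simp_rw [fSymPair_iff_mem_closure]
  rw [setOf_mul_inv_eq_comap_inl hdiag, SetLike.coe_set_eq]
  have := normal_comap_inl hdiag
  refine le_antisymm (comap_inl_closure_le ?_) (Subgroup.normalClosure_le_normal ?_)
  · rintro ⟨a, b⟩ ⟨ha, hb, hab⟩
    exact Subgroup.subset_normalClosure ⟨a, ha, b, hb, hab, rfl⟩
  · rintro _ ⟨a, ha, b, hb, hab, rfl⟩
    rw [← setOf_mul_inv_eq_comap_inl hdiag]
    exact ⟨a, b, Subgroup.subset_closure ⟨ha, hb, hab⟩, rfl⟩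
end

section
/- Given a function f: A → B between sets, the kernel of the induced homomorphism F(f): F(A) → F(B) between free groups is the normal subgroup of F(A) generated by the elements a·b⁻¹ with a, b ∈ A and f(a) = f(b). -/
/-!
The relators `of a * (of b)⁻¹` with `f a = f b` lie in the kernel of `F(f)`. Conversely, modulo
any normal subgroup `N` containing them, `a ↦ of a` is constant on the fibres of `f`, so it extends
along `f` to a map `B → F(A) ⧸ N`; the induced homomorphism `F(B) → F(A) ⧸ N` composed with `F(f)`
is the quotient map, whence `ker F(f) ≤ N`.
-/

namespace FreeGroup

variable {α β : Type*}

theorem ker_map_le_of_factorsThrough {f : α → β} {N : Subgroup (FreeGroup α)} [N.Normal]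
    (hf : Function.FactorsThrough (fun a => (of a : FreeGroup α ⧸ N)) f) :
    (map f).ker ≤ N := by
  set ψ : FreeGroup β →* FreeGroup α ⧸ N :=
    lift (Function.extend f (fun a => (of a : FreeGroup α ⧸ N)) 1)
  have hψ : ψ.comp (map f) = QuotientGroup.mk' N :=
    ext_hom _ _ fun a => by simp [ψ, hf.extend_apply]
  calc (map f).ker ≤ (ψ.comp (map f)).ker := (map f).ker_le_comap ψ.ker
    _ = N := by rw [hψ, QuotientGroup.ker_mk']

theorem ker_map_le_iff {f : α → β} {N : Subgroup (FreeGroup α)} [N.Normal] :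
    (map f).ker ≤ N ↔ ∀ a b, f a = f b → of a * (of b)⁻¹ ∈ N := by
  refine ⟨fun h a b hab => h ?_, fun h => ker_map_le_of_factorsThrough fun a b hab => ?_⟩
  · simp [MonoidHom.mem_ker, hab]
  · exact QuotientGroup.eq_iff_div_mem.2 (h a b hab)

end FreeGroup

/-- The kernel of the map `F(f) : F(A) → F(B)` between free groups induced by a
function `f : A → B` is the normal closure of the elements `a·b⁻¹` with
`f a = f b`. -/
theorem ker_freeGroupMap_eq_normalClosure {A B : Type*} (f : A → B) :
    (FreeGroup.map f).ker =
      Subgroup.normalClosure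
        {x : FreeGroup A |
          ∃ a b : A, f a = f b ∧ x = FreeGroup.of a * (FreeGroup.of b)⁻¹} := by
  refine le_antisymm (FreeGroup.ker_map_le_iff.2 fun a b hab => ?_)
    (Subgroup.normalClosure_le_normal ?_)
  · exact Subgroup.subset_normalClosure ⟨a, b, hab, rfl⟩
  · rintro x ⟨a, b, hab, rfl⟩
    exact FreeGroup.ker_map_le_iff.1 le_rfl a b hab
end

section
/- Given a set A, the set A × F°(A), where F°(A) ≤ F(A) is the kernel of the characteristic map χ: F(A) → ℤ, with operations (a,g) ◁ (b,h) := (a, a⁻¹·g·h⁻¹·b·h) and (a,g) ◁⁻¹ (b,h) := (a, a⁻¹·g·h⁻¹·b⁻¹·h), is a quandle (satisfies (R1), (R2) and x ◁ x = x). -/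
/-- The characteristic homomorphism `χ : F(A) → ℤ` sending each generator to `1`. -/
def chi (A : Type*) : FreeGroup A →* Multiplicative ℤ :=
  FreeGroup.lift fun _ => Multiplicative.ofAdd (1 : ℤ)

/-- The free quandle operation `(a,g) ◁ (b,h) = (a, a⁻¹·g·h⁻¹·b·h)`. -/
def fqAct {A : Type*} (p q : A × FreeGroup A) : A × FreeGroup A :=
  (p.1, (FreeGroup.of p.1)⁻¹ * p.2 * q.2⁻¹ * FreeGroup.of q.1 * q.2)

/-- The free quandle operation `(a,g) ◁⁻¹ (b,h) = (a, a·g·h⁻¹·b⁻¹·h)`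
(the characteristic-zero normalization of `(a, g·h⁻¹·b⁻¹·h)`). -/
def fqInv {A : Type*} (p q : A × FreeGroup A) : A × FreeGroup A :=
  (p.1, FreeGroup.of p.1 * p.2 * q.2⁻¹ * (FreeGroup.of q.1)⁻¹ * q.2)


/-!
Read `(a, g)` as the conjugate `g⁻¹ a g` in `F(A)`. Then `◁` is conjugation `x ◁ y = y⁻¹ x y`,
except for the extra left factor `a⁻¹`: it commutes with `a`, so it does not change the conjugate,
but it cancels the `χ(b) = 1` contributed by `h⁻¹ b h` and keeps `g` in `F°(A)`. The axioms
(R1), (R2), (Q1) then hold as identities in `F(A)` on all of `A × F(A)`.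
-/

section FreeQuandle

variable {A : Type*}

theorem chi_of (a : A) : chi A (FreeGroup.of a) = Multiplicative.ofAdd 1 :=
  FreeGroup.lift_apply_of

theorem chi_fqAct_snd (p q : A × FreeGroup A) : chi A (fqAct p q).2 = chi A p.2 := by
  simp only [fqAct, map_mul, map_inv, chi_of]
  apply Multiplicative.toAdd.injective
  simp only [toAdd_mul, toAdd_inv, toAdd_ofAdd]
  abel

theorem chi_fqInv_snd (p q : A × FreeGroup A) : chi A (fqInv p q).2 = chi A p.2 := by
  simp only [fqInv, map_mul, map_inv, chi_of]
  apply Multiplicative.toAdd.injective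
  simp only [toAdd_mul, toAdd_inv, toAdd_ofAdd]
  abel

theorem fqAct_snd_mem_ker_iff (p q : A × FreeGroup A) :
    (fqAct p q).2 ∈ (chi A).ker ↔ p.2 ∈ (chi A).ker := by
  simp only [MonoidHom.mem_ker, chi_fqAct_snd]

theorem fqInv_snd_mem_ker_iff (p q : A × FreeGroup A) :
    (fqInv p q).2 ∈ (chi A).ker ↔ p.2 ∈ (chi A).ker := by
  simp only [MonoidHom.mem_ker, chi_fqInv_snd]

theorem fqInv_fqAct (p q : A × FreeGroup A) : fqInv (fqAct p q) q = p :=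
  Prod.ext rfl (by simp only [fqAct, fqInv]; group)

theorem fqAct_fqInv (p q : A × FreeGroup A) : fqAct (fqInv p q) q = p :=
  Prod.ext rfl (by simp only [fqAct, fqInv]; group)

theorem fqAct_fqAct_distrib (p q r : A × FreeGroup A) :
    fqAct (fqAct p q) r = fqAct (fqAct p r) (fqAct q r) :=
  Prod.ext rfl (by simp only [fqAct]; group)

theorem fqAct_self (p : A × FreeGroup A) : fqAct p p = p :=
  Prod.ext rfl (by simp only [fqAct]; group)

end FreeQuandle

/-- The set `A × F°(A)`, where `F°(A) = ker χ`, is closed under the free quandle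
operations and satisfies (R1), (R2) and the quandle axiom (Q1). -/
theorem freeQuandle_is_quandle {A : Type*} :
    (∀ p q : A × FreeGroup A, p.2 ∈ (chi A).ker → q.2 ∈ (chi A).ker →
      (fqAct p q).2 ∈ (chi A).ker ∧ (fqInv p q).2 ∈ (chi A).ker) ∧
    (∀ p q : A × FreeGroup A, p.2 ∈ (chi A).ker → q.2 ∈ (chi A).ker →
      fqInv (fqAct p q) q = p ∧ fqAct (fqInv p q) q = p) ∧
    (∀ p q r : A × FreeGroup A,
      p.2 ∈ (chi A).ker → q.2 ∈ (chi A).ker → r.2 ∈ (chi A).ker →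
      fqAct (fqAct p q) r = fqAct (fqAct p r) (fqAct q r)) ∧
    (∀ p : A × FreeGroup A, p.2 ∈ (chi A).ker → fqAct p p = p) :=
  ⟨fun p q hp _ => ⟨(fqAct_snd_mem_ker_iff p q).2 hp, (fqInv_snd_mem_ker_iff p q).2 hp⟩,
    fun p q _ _ => ⟨fqInv_fqAct p q, fqAct_fqInv p q⟩,
    fun p q r _ _ _ => fqAct_fqAct_distrib p q r,
    fun p _ => fqAct_self p⟩
end

section
/- The action of the free group F(A) on the free rack Fr(A) = A × F(A), given by (a,g)·h = (a, gh), is free: if (a, gh) = (a, g) then h = e. Consequently, the homomorphism s: F(A) → Inn(Fr(A)) induced by sending a generator a to the symmetry S_{(a,e)} is injective (when acting via this action), so Inn(Fr(A)) ≅ F(A). -/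
/-- The operation `(a,g) ◁⁻¹ (b,h) = (a, g·h⁻¹·b⁻¹·h)` on the free rack `A × F(A)`. -/
def frInv {A : Type*} (p q : A × FreeGroup A) : A × FreeGroup A :=
  (p.1, p.2 * q.2⁻¹ * (FreeGroup.of q.1)⁻¹ * q.2)

/-- The symmetry of the free rack `Fr(A) = A × F(A)` at a point `q`. -/
def frSym {A : Type*} (q : A × FreeGroup A) : Equiv.Perm (A × FreeGroup A) where
  toFun p := frAct p q
  invFun p := frInv p q
  left_inv p := by cases p; simp [frAct, frInv, mul_assoc]
  right_inv p := by cases p; simp [frAct, frInv, mul_assoc]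

section

variable {A : Type*}

def freeGroupInvOf : FreeGroup A →* FreeGroup A :=
  FreeGroup.lift fun a => (FreeGroup.of a)⁻¹

lemma freeGroupInvOf_involutive : Function.Involutive (freeGroupInvOf (A := A)) := by
  have : freeGroupInvOf.comp freeGroupInvOf = MonoidHom.id (FreeGroup A) :=
    FreeGroup.ext_hom _ _ fun a => by simp [freeGroupInvOf]
  exact DFunLike.congr_fun this

/-- The right action `(a, g) · h = (a, g h)` of `F(A)` on `Fr(A)`, made a left action by
acting with `h⁻¹`. -/
def frTranslate : FreeGroup A →* Equiv.Perm (A × FreeGroup A) where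
  toFun h := Equiv.prodCongr (Equiv.refl A) (Equiv.mulRight h⁻¹)
  map_one' := by ext <;> simp
  map_mul' g h := by ext <;> simp [mul_assoc]

@[simp] lemma frTranslate_apply (h : FreeGroup A) (p : A × FreeGroup A) :
    frTranslate h p = (p.1, p.2 * h⁻¹) :=
  rfl

lemma frTranslate_injective [Nonempty A] : Function.Injective (frTranslate (A := A)) := by
  intro g h hgh
  have := congrArg Prod.snd (Equiv.congr_fun hgh (Classical.arbitrary A, 1))
  simpa using this

lemma lift_frSym_eq_frTranslate_comp :
    FreeGroup.lift (fun a : A => frSym ((a, 1) : A × FreeGroup A)) =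
      frTranslate.comp freeGroupInvOf :=
  FreeGroup.ext_hom _ _ fun a => Equiv.ext fun p => by
    rw [MonoidHom.comp_apply, freeGroupInvOf, FreeGroup.lift_apply_of, frTranslate_apply]
    simp [frSym, frAct]

lemma frSym_eq_frTranslate (q : A × FreeGroup A) :
    frSym q = frTranslate (q.2⁻¹ * FreeGroup.of q.1 * q.2)⁻¹ := by
  refine Equiv.ext fun p => ?_
  rw [frTranslate_apply]
  simp [frSym, frAct, mul_assoc]

end

/-- The right action of `F(A)` on `Fr(A) = A × F(A)` by `(a,g)·h = (a,gh)` is free;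
consequently the homomorphism `s : F(A) → Inn(Fr(A))` determined by sending a
generator `a` to the symmetry `S_{(a,e)}` is injective, and its image is the whole
group of inner automorphisms, so `Inn(Fr(A)) ≅ F(A)`. -/
theorem freeRack_free_action_and_inn {A : Type*} :
    (∀ (a : A) (g h : FreeGroup A), (a, g * h) = (a, g) → h = 1) ∧
    Function.Injective
      (FreeGroup.lift fun a : A => frSym ((a, 1) : A × FreeGroup A)) ∧
    (FreeGroup.lift fun a : A => frSym ((a, 1) : A × FreeGroup A)).range =
      Subgroup.closure (Set.range (frSym (A := A))) := by
  refine ⟨fun a g h hgh => mul_eq_left.mp (Prod.ext_iff.mp hgh).2, ?_, ?_⟩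
  · rw [lift_frSym_eq_frTranslate_comp]
    rcases isEmpty_or_nonempty A with _ | _
    · exact Function.injective_of_subsingleton _
    · exact frTranslate_injective.comp freeGroupInvOf_involutive.injective
  · rw [FreeGroup.range_lift_eq_closure]
    refine le_antisymm (Subgroup.closure_mono ?_) (Subgroup.closure_le _ |>.mpr ?_)
    · rintro _ ⟨a, rfl⟩
      exact ⟨(a, 1), rfl⟩
    · rintro _ ⟨q, rfl⟩
      rw [SetLike.mem_coe, ← FreeGroup.range_lift_eq_closure, lift_frSym_eq_frTranslate_comp,
        frSym_eq_frTranslate]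
      exact ⟨freeGroupInvOf (q.2⁻¹ * FreeGroup.of q.1 * q.2)⁻¹,
        by rw [MonoidHom.comp_apply, freeGroupInvOf_involutive]⟩
end
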